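/- Subadditivity of the min-entropy bound for block-diagonal states: let {H_j^A} for j = 0,…,J be mutually orthogonal subspaces of H^A with dimensions d_j, let π_j^A be the maximally mixed state on H_j^A, let {p_j} be a probability distribution and ρ_j^{BC} states on B⊗C. For the state Λ = Σ_j p_j π_j^A ⊗ ρ_j^{BC}, it holds that 2^{-H_min(AB|C)_Λ} ≤ Σ_j (p_j/d_j)·2^{-H_min(B|C)_{ρ_j}}. -/

import Mathlib

open scoped Matrix Kronecker ComplexOrder
open Matrix MeasureTheory

noncomputable section

def traceNorm {n : Type*} [Fintype n] [DecidableEq n] (A : Matrix n n ℂ) : ℝ :=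
  (((Matrix.posSemidef_conjTranspose_mul_self A).1.eigenvectorUnitary : Matrix n n ℂ) *
    diagonal (((↑) : ℝ → ℂ) ∘ (Real.sqrt ∘ (Matrix.posSemidef_conjTranspose_mul_self A).1.eigenvalues)) *
    (star (Matrix.posSemidef_conjTranspose_mul_self A).1.eigenvectorUnitary : Matrix n n ℂ)).trace.re

def IsDensity {n : Type*} [Fintype n] (ρ : Matrix n n ℂ) : Prop :=
  ρ.PosSemidef ∧ ρ.trace = 1

def ptraceB {a b : Type*} [Fintype b] (M : Matrix (a × b) (a × b) ℂ) : Matrix a a ℂ :=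
  Matrix.of fun i j => ∑ x : b, M (i, x) (j, x)

def ptraceA {a b : Type*} [Fintype a] (M : Matrix (a × b) (a × b) ℂ) : Matrix b b ℂ :=
  Matrix.of fun i j => ∑ x : a, M (x, i) (x, j)

def condMinEntropy {x c : Type*} [Fintype x] [DecidableEq x] [Fintype c] [DecidableEq c]
    (ρ : Matrix (x × c) (x × c) ℂ) : ℝ :=
  sSup {l : ℝ | ∃ σ : Matrix c c ℂ, IsDensity σ ∧
    ((((2:ℝ) ^ (-l) : ℝ) : ℂ) • ((1 : Matrix x x ℂ) ⊗ₖ σ) - ρ).PosSemidef}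

def outer {n : Type*} (v : n → ℂ) : Matrix n n ℂ :=
  Matrix.of fun i j => v i * star (v j)

lemma psd_smul_real {n : Type*} [Fintype n] {A : Matrix n n ℂ} (hA : A.PosSemidef) {t : ℝ}
    (ht : 0 ≤ t) : ((t : ℂ) • A).PosSemidef := by
  refine Matrix.PosSemidef.of_dotProduct_mulVec_nonneg ?_ fun x => ?_
  · unfold Matrix.IsHermitian
    rw [conjTranspose_smul, hA.1]
    congr 1
    simp [Complex.star_def, Complex.conj_ofReal]
  · rw [smul_mulVec, dotProduct_smul, smul_eq_mul]
    exact mul_nonneg (Complex.zero_le_real.mpr ht) (hA.dotProduct_mulVec_nonneg x)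

lemma psd_kron {a b : Type*} [Fintype a] [DecidableEq a] [Fintype b] [DecidableEq b]
    {A : Matrix a a ℂ} {B : Matrix b b ℂ} (hA : A.PosSemidef) (hB : B.PosSemidef) :
    (A ⊗ₖ B).PosSemidef := by
  exact hA.kronecker hB

lemma psd_sum {n ι : Type*} [Fintype n] (s : Finset ι) (f : ι → Matrix n n ℂ)
    (h : ∀ i ∈ s, (f i).PosSemidef) : (∑ i ∈ s, f i).PosSemidef := by
  induction s using Finset.cons_induction with
  | empty => simpa using Matrix.PosSemidef.zero
  | cons i s hi ih =>
    rw [Finset.sum_cons]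
    exact (h i (Finset.mem_cons_self _ _)).add (ih fun j hj => h j (Finset.mem_cons_of_mem hj))

lemma psd_proj {n : Type*} [Fintype n] {P : Matrix n n ℂ} (hherm : P.IsHermitian)
    (hidem : P * P = P) : P.PosSemidef := by
  have h : P = Pᴴ * P := by rw [hherm]; exact hidem.symm
  rw [h]; exact posSemidef_conjTranspose_mul_self P

lemma psd_one_sub_proj {n : Type*} [Fintype n] [DecidableEq n] {P : Matrix n n ℂ}
    (hherm : P.IsHermitian) (hidem : P * P = P) : ((1 : Matrix n n ℂ) - P).PosSemidef := by
  refine psd_proj ?_ ?_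
  · unfold Matrix.IsHermitian
    rw [conjTranspose_sub, conjTranspose_one, hherm]
  · have h2 : ((1 : Matrix n n ℂ) - P) * (1 - P) = 1 - P - P + P * P := by noncomm_ring
    rw [h2, hidem]
    abel

lemma psd_diag_nonneg {n : Type*} [Fintype n] [DecidableEq n] {M : Matrix n n ℂ}
    (hM : M.PosSemidef) (i : n) : 0 ≤ M i i := by
  exact hM.diag_nonneg

lemma psd_trace_re_nonneg {n : Type*} [Fintype n] [DecidableEq n] {M : Matrix n n ℂ}
    (hM : M.PosSemidef) : 0 ≤ M.trace.re := by
  rw [Matrix.trace, Complex.re_sum]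
  exact Finset.sum_nonneg fun i _ => (Complex.le_def.mp (psd_diag_nonneg hM i)).1


lemma psd_one_sub_density {n : Type*} [Fintype n] [DecidableEq n] {ρ : Matrix n n ℂ}
    (h : IsDensity ρ) : ((1 : Matrix n n ℂ) - ρ).PosSemidef := by
  obtain ⟨hpsd, htr⟩ := h
  have hH := hpsd.1
  set U : Matrix n n ℂ := (hH.eigenvectorUnitary : Matrix n n ℂ) with hUdef
  have hU : U * star U = 1 := Matrix.mem_unitaryGroup_iff.mp hH.eigenvectorUnitary.2
  have hU' : star U * U = 1 := Matrix.mem_unitaryGroup_iff'.mp hH.eigenvectorUnitary.2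
  have hspec : ρ = U * diagonal (RCLike.ofReal ∘ hH.eigenvalues) * star U := hH.spectral_theorem
  -- sum of eigenvalues is 1
  have hsum : ∑ i, hH.eigenvalues i = 1 := by
    have h1 : ρ.trace = ∑ i, (hH.eigenvalues i : ℂ) := by
      conv_lhs => rw [hspec]
      rw [Matrix.trace_mul_cycle, hU', Matrix.one_mul, Matrix.trace_diagonal]
      simp
    rw [htr] at h1
    have := congrArg Complex.re h1
    simpa [Complex.re_sum] using this.symm
  have heig : ∀ i, hH.eigenvalues i ≤ 1 := by
    intro i
    rw [← hsum]
    exact Finset.single_le_sum (f := hH.eigenvalues)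
      (fun j _ => hpsd.eigenvalues_nonneg j) (Finset.mem_univ i)
  have key : (1 : Matrix n n ℂ) - ρ
      = U * diagonal (fun i => (1 : ℂ) - (hH.eigenvalues i : ℂ)) * star U := by
    have hdiag : diagonal (fun i => (1 : ℂ) - (hH.eigenvalues i : ℂ))
        = 1 - diagonal (RCLike.ofReal ∘ hH.eigenvalues) := by
      rw [← Matrix.diagonal_one, Matrix.diagonal_sub]
      rfl
    rw [hdiag, Matrix.mul_sub, Matrix.sub_mul, Matrix.mul_one, hU, ← hspec]
  rw [key]
  refine Matrix.PosSemidef.mul_mul_conjTranspose_same ?_ U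
  refine Matrix.PosSemidef.diagonal fun i => ?_
  have : ((1 - hH.eigenvalues i : ℝ) : ℂ) = (1 : ℂ) - (hH.eigenvalues i : ℂ) := by push_cast; ring
  rw [← this]
  exact Complex.zero_le_real.mpr (by linarith [heig i])

lemma kron_sum_right {l m n p ι : Type*} (A : Matrix l m ℂ) (s : Finset ι)
    (f : ι → Matrix n p ℂ) : A ⊗ₖ (∑ i ∈ s, f i) = ∑ i ∈ s, A ⊗ₖ f i := by
  ext ⟨i, j⟩ ⟨k, q⟩
  simp [kroneckerMap_apply, Finset.mul_sum, Matrix.sum_apply]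

lemma kron_sub_right {l m n p : Type*} (A : Matrix l m ℂ) (B C : Matrix n p ℂ) :
    A ⊗ₖ (B - C) = A ⊗ₖ B - A ⊗ₖ C := by
  ext ⟨i, j⟩ ⟨k, q⟩
  simp [kroneckerMap_apply, mul_sub, Matrix.sub_apply]

lemma sub_kron_left {l m n p : Type*} (A B : Matrix l m ℂ) (C : Matrix n p ℂ) :
    (A - B) ⊗ₖ C = A ⊗ₖ C - B ⊗ₖ C := by
  ext ⟨i, j⟩ ⟨k, q⟩
  simp [kroneckerMap_apply, sub_mul, Matrix.sub_apply]


lemma S_nonempty {x c : Type*} [Fintype x] [DecidableEq x] [Fintype c] [DecidableEq c]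
    {ρ : Matrix (x × c) (x × c) ℂ} (h : IsDensity ρ) :
    {l : ℝ | ∃ σ : Matrix c c ℂ, IsDensity σ ∧
      ((((2:ℝ) ^ (-l) : ℝ) : ℂ) • ((1 : Matrix x x ℂ) ⊗ₖ σ) - ρ).PosSemidef}.Nonempty := by
  have hne : Nonempty (x × c) := by
    by_contra hemp
    rw [not_nonempty_iff] at hemp
    have h0 : ρ.trace = 0 := by simp [Matrix.trace]
    rw [h.2] at h0
    exact one_ne_zero h0
  have hc : Nonempty c := ⟨hne.some.2⟩
  set N : ℝ := (Fintype.card c : ℝ) with hNdef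
  have hN : 0 < N := by rw [hNdef]; exact_mod_cast (Fintype.card_pos : 0 < Fintype.card c)
  refine ⟨-Real.logb 2 N, ((N⁻¹ : ℝ) : ℂ) • 1, ⟨?_, ?_⟩, ?_⟩
  · exact psd_smul_real Matrix.PosSemidef.one (by positivity)
  · rw [Matrix.trace_smul, Matrix.trace_one, smul_eq_mul, ← Complex.ofReal_natCast, ← hNdef, ← Complex.ofReal_mul, inv_mul_cancel₀ hN.ne', Complex.ofReal_one]
  · have h2 : (2:ℝ) ^ (-(-Real.logb 2 N)) = N := by
      rw [neg_neg]; exact Real.rpow_logb (by norm_num) (by norm_num) hN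
    rw [h2]
    have hkron : ((N : ℝ) : ℂ) • ((1 : Matrix x x ℂ) ⊗ₖ (((N⁻¹ : ℝ) : ℂ) • (1 : Matrix c c ℂ)))
        = (1 : Matrix (x × c) (x × c) ℂ) := by
      rw [Matrix.kronecker_smul, smul_smul, Matrix.one_kronecker_one, ← Complex.ofReal_mul,
        mul_inv_cancel₀ hN.ne', Complex.ofReal_one, one_smul]
    rw [hkron]
    exact psd_one_sub_density h

lemma S_bddAbove {x c : Type*} [Fintype x] [DecidableEq x] [Fintype c] [DecidableEq c]
    {ρ : Matrix (x × c) (x × c) ℂ} (htr : ρ.trace = 1) :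
    BddAbove {l : ℝ | ∃ σ : Matrix c c ℂ, IsDensity σ ∧
      ((((2:ℝ) ^ (-l) : ℝ) : ℂ) • ((1 : Matrix x x ℂ) ⊗ₖ σ) - ρ).PosSemidef} := by
  refine ⟨Real.logb 2 (Fintype.card x), fun l hl => ?_⟩
  obtain ⟨σ, hσ, hpsd⟩ := hl
  set t : ℝ := (2:ℝ) ^ (-l) with htdef
  have ht : 0 < t := Real.rpow_pos_of_pos (by norm_num) _
  have htrace : (((t : ℝ) : ℂ) • ((1 : Matrix x x ℂ) ⊗ₖ σ) - ρ).trace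
      = ((t * (Fintype.card x : ℝ) - 1 : ℝ) : ℂ) := by
    rw [Matrix.trace_sub, Matrix.trace_smul, Matrix.trace_kronecker, Matrix.trace_one, hσ.2, htr]
    rw [smul_eq_mul]
    push_cast
    ring
  have hre := psd_trace_re_nonneg hpsd
  rw [htrace] at hre
  rw [Complex.ofReal_re] at hre
  have hineq : 1 ≤ t * (Fintype.card x : ℝ) := by linarith
  -- hence 2 ^ l ≤ card x
  have h2l : (2:ℝ) ^ l ≤ (Fintype.card x : ℝ) := by
    have hinv : t = ((2:ℝ) ^ l)⁻¹ := by
      rw [htdef, Real.rpow_neg (by norm_num)]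
    rw [hinv] at hineq
    have hp : (0:ℝ) < (2:ℝ) ^ l := Real.rpow_pos_of_pos (by norm_num) _
    calc (2:ℝ) ^ l = ((2:ℝ) ^ l) * 1 := by ring
    _ ≤ ((2:ℝ) ^ l) * (((2:ℝ) ^ l)⁻¹ * (Fintype.card x : ℝ)) := by
        exact mul_le_mul_of_nonneg_left hineq hp.le
    _ = (Fintype.card x : ℝ) := by field_simp
  calc l = Real.logb 2 ((2:ℝ) ^ l) := (Real.logb_rpow (by norm_num) (by norm_num)).symm
  _ ≤ Real.logb 2 (Fintype.card x) :=
      Real.logb_le_logb_of_le (by norm_num) (Real.rpow_pos_of_pos (by norm_num) _) h2l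

lemma trace_reindex {n m : Type*} [Fintype n] [Fintype m] [DecidableEq n] [DecidableEq m]
    (e : n ≃ m) (M : Matrix n n ℂ) : (Matrix.reindex e e M).trace = M.trace := by
  simp only [Matrix.trace, Matrix.diag, Matrix.reindex_apply, Matrix.submatrix_apply]
  exact e.symm.sum_comp fun j => M j j


/-- Subadditivity of the min-entropy bound for block-diagonal states:
for `Λ = Σ_j p_j π_j^A ⊗ ρ_j^{BC}` one has
`2^{-H_min(AB|C)_Λ} ≤ Σ_j (p_j/d_j)·2^{-H_min(B|C)_{ρ_j}}`. -/
theorem condMinEntropy_block_diagonal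
    {a b c : Type*} [Fintype a] [DecidableEq a] [Fintype b] [DecidableEq b]
    [Fintype c] [DecidableEq c] (J : ℕ)
    (P : Fin (J + 1) → Matrix a a ℂ)
    (hPherm : ∀ j, (P j).IsHermitian)
    (hPidem : ∀ j, P j * P j = P j)
    (hPorth : ∀ j j', j ≠ j' → P j * P j' = 0)
    (d : Fin (J + 1) → ℕ) (hd : ∀ j, (P j).trace = (d j : ℂ)) (hdpos : ∀ j, 0 < d j)
    (p : Fin (J + 1) → ℝ) (hp0 : ∀ j, 0 ≤ p j) (hp1 : ∑ j, p j = 1)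
    (ρ : Fin (J + 1) → Matrix (b × c) (b × c) ℂ) (hρ : ∀ j, IsDensity (ρ j))
    (Λ : Matrix ((a × b) × c) ((a × b) × c) ℂ)
    (hΛ : Λ = Matrix.reindex (Equiv.prodAssoc a b c).symm (Equiv.prodAssoc a b c).symm
        (∑ j, (((p j : ℂ)) / (d j : ℂ)) • (P j ⊗ₖ ρ j))) :
    (2 : ℝ) ^ (-(condMinEntropy Λ)) ≤
      ∑ j, (p j / (d j : ℝ)) * (2 : ℝ) ^ (-(condMinEntropy (ρ j))) := by
  have hdC : ∀ j, ((d j : ℂ)) ≠ 0 := fun j => by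
    exact_mod_cast Nat.cast_ne_zero.mpr (hdpos j).ne'
  have hdR : ∀ j, (0:ℝ) < (d j : ℝ) := fun j => by exact_mod_cast hdpos j
  -- trace of Λ is 1
  have htrΛ : Λ.trace = 1 := by
    rw [hΛ, trace_reindex, Matrix.trace_sum]
    have : ∀ j : Fin (J+1), ((((p j : ℂ)) / (d j : ℂ)) • (P j ⊗ₖ ρ j)).trace = ((p j : ℝ) : ℂ) := by
      intro j
      rw [Matrix.trace_smul, Matrix.trace_kronecker, hd j, (hρ j).2, mul_one, smul_eq_mul,
        div_mul_cancel₀ _ (hdC j)]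
    rw [Finset.sum_congr rfl fun j _ => this j, ← Complex.ofReal_sum, hp1, Complex.ofReal_one]
  set RHS : ℝ := ∑ j, (p j / (d j : ℝ)) * (2:ℝ) ^ (-(condMinEntropy (ρ j))) with hRHS
  have hRHSnn : 0 ≤ RHS := Finset.sum_nonneg fun j _ =>
    mul_nonneg (div_nonneg (hp0 j) (hdR j).le) (Real.rpow_nonneg (by norm_num) _)
  have key : ∀ ε : ℝ, 0 < ε → (2:ℝ) ^ (-(condMinEntropy Λ)) ≤ (2:ℝ) ^ ε * RHS := by
    intro ε hε
    -- choose near-optimal l j and σ j for each block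
    have hchoice : ∀ j : Fin (J+1), ∃ lj : ℝ, (∃ σ : Matrix c c ℂ, IsDensity σ ∧
        ((((2:ℝ) ^ (-lj) : ℝ) : ℂ) • ((1 : Matrix b b ℂ) ⊗ₖ σ) - ρ j).PosSemidef) ∧
        condMinEntropy (ρ j) - ε < lj := by
      intro j
      obtain ⟨lj, hmem, hlt⟩ := exists_lt_of_lt_csSup (S_nonempty (hρ j))
        (show condMinEntropy (ρ j) - ε < condMinEntropy (ρ j) by linarith)
      exact ⟨lj, hmem, hlt⟩
    choose l hlmem hllt using hchoice
    choose σs hσdens hσpsd using hlmem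
    set t : Fin (J+1) → ℝ := fun j => (2:ℝ) ^ (-(l j)) with htdef
    have htpos : ∀ j, 0 < t j := fun j => Real.rpow_pos_of_pos (by norm_num) _
    have htle : ∀ j, t j ≤ (2:ℝ) ^ ε * (2:ℝ) ^ (-(condMinEntropy (ρ j))) := by
      intro j
      rw [← Real.rpow_add (by norm_num)]
      exact (Real.rpow_le_rpow_left_iff (by norm_num)).mpr (by linarith [hllt j])
    set w : Fin (J+1) → ℝ := fun j => p j / (d j : ℝ) * t j with hwdef
    have hwnn : ∀ j, 0 ≤ w j := fun j =>
      mul_nonneg (div_nonneg (hp0 j) (hdR j).le) (htpos j).le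
    set K : ℝ := ∑ j, w j with hKdef
    have hKpos : 0 < K := by
      have hj0 : ∃ j, 0 < p j := by
        by_contra hno
        push_neg at hno
        have : ∀ j : Fin (J+1), p j = 0 := fun j => le_antisymm (hno j) (hp0 j)
        rw [Finset.sum_congr rfl fun j _ => this j] at hp1
        simp at hp1
      obtain ⟨j0, hj0⟩ := hj0
      refine Finset.sum_pos' (fun j _ => hwnn j) ⟨j0, Finset.mem_univ _, ?_⟩
      exact mul_pos (div_pos hj0 (hdR j0)) (htpos j0)
    -- the combined density operator on C
    set σ : Matrix c c ℂ := ∑ j, ((w j / K : ℝ) : ℂ) • σs j with hσdef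
    have hσdensity : IsDensity σ := by
      constructor
      · exact psd_sum _ _ fun j _ =>
          psd_smul_real (hσdens j).1 (div_nonneg (hwnn j) hKpos.le)
      · rw [hσdef, Matrix.trace_sum]
        have : ∀ j : Fin (J+1), (((w j / K : ℝ) : ℂ) • σs j).trace = ((w j / K : ℝ) : ℂ) := by
          intro j
          rw [Matrix.trace_smul, (hσdens j).2, smul_eq_mul, mul_one]
        rw [Finset.sum_congr rfl fun j _ => this j, ← Complex.ofReal_sum, ← Finset.sum_div,
          ← hKdef, div_self hKpos.ne', Complex.ofReal_one]
    -- the candidate lower bound for condMinEntropy Λ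
    set l₀ : ℝ := -Real.logb 2 K with hl₀def
    have h2l₀ : (2:ℝ) ^ (-l₀) = K := by
      rw [hl₀def, neg_neg]
      exact Real.rpow_logb (by norm_num) (by norm_num) hKpos
    -- main positivity computation
    have hmainpsd : ((((2:ℝ) ^ (-l₀) : ℝ) : ℂ) • ((1 : Matrix (a × b) (a × b) ℂ) ⊗ₖ σ)
        - Λ).PosSemidef := by
      rw [h2l₀, hΛ]
      set e := (Equiv.prodAssoc a b c).symm with hedef
      have hkron1 : (1 : Matrix (a × b) (a × b) ℂ) ⊗ₖ σ
          = Matrix.reindex e e ((1 : Matrix a a ℂ) ⊗ₖ ((1 : Matrix b b ℂ) ⊗ₖ σ)) := by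
        rw [hedef, ← Matrix.kronecker_assoc (1 : Matrix a a ℂ) (1 : Matrix b b ℂ) σ,
          ← Matrix.one_kronecker_one (α := ℂ) (m := a) (n := b)]
        simp [Matrix.reindex_apply, Matrix.submatrix_submatrix]
      have hlin : ∀ (M N : Matrix (a × (b × c)) (a × (b × c)) ℂ) (z : ℂ),
          z • Matrix.reindex e e M - Matrix.reindex e e N = Matrix.reindex e e (z • M - N) := by
        intro M N z
        ext i j
        simp
      rw [hkron1, hlin]
      rw [Matrix.reindex_apply]
      apply Matrix.PosSemidef.submatrix
      -- rewrite inner matrix as a sum of PSD terms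
      have hinner : ((K : ℝ) : ℂ) • ((1 : Matrix a a ℂ) ⊗ₖ ((1 : Matrix b b ℂ) ⊗ₖ σ))
          - (∑ j, (((p j : ℂ)) / (d j : ℂ)) • (P j ⊗ₖ ρ j))
          = ∑ j, (((p j / (d j : ℝ) : ℝ)) : ℂ) •
              ((((t j : ℝ)) : ℂ) • ((1 : Matrix a a ℂ) ⊗ₖ ((1 : Matrix b b ℂ) ⊗ₖ σs j))
                - P j ⊗ₖ ρ j) := by
        have hexp : (1 : Matrix a a ℂ) ⊗ₖ ((1 : Matrix b b ℂ) ⊗ₖ σ)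
            = ∑ j, ((w j / K : ℝ) : ℂ) •
                ((1 : Matrix a a ℂ) ⊗ₖ ((1 : Matrix b b ℂ) ⊗ₖ σs j)) := by
          rw [hσdef, kron_sum_right, kron_sum_right]
          refine Finset.sum_congr rfl fun j _ => ?_
          rw [Matrix.kronecker_smul, Matrix.kronecker_smul]
        rw [hexp, Finset.smul_sum, ← Finset.sum_sub_distrib]
        refine Finset.sum_congr rfl fun j _ => ?_
        rw [smul_smul, smul_sub, smul_smul]
        congr 2
        · rw [← Complex.ofReal_mul, ← Complex.ofReal_mul]
          congr 1
          show K * (p j / (d j : ℝ) * t j / K) = p j / (d j : ℝ) * t j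
          rw [mul_comm]
          exact div_mul_cancel₀ _ hKpos.ne'
        · push_cast
          ring
      rw [hinner]
      apply psd_sum
      intro j _
      apply psd_smul_real _ (div_nonneg (hp0 j) (hdR j).le)
      have hsplit : (((t j : ℝ)) : ℂ) • ((1 : Matrix a a ℂ) ⊗ₖ ((1 : Matrix b b ℂ) ⊗ₖ σs j))
          - P j ⊗ₖ ρ j
          = (((t j : ℝ)) : ℂ) • (((1 : Matrix a a ℂ) - P j) ⊗ₖ ((1 : Matrix b b ℂ) ⊗ₖ σs j))
            + P j ⊗ₖ ((((t j : ℝ)) : ℂ) • ((1 : Matrix b b ℂ) ⊗ₖ σs j) - ρ j) := by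
        rw [sub_kron_left, kron_sub_right, smul_sub, Matrix.kronecker_smul]
        abel
      rw [hsplit]
      refine Matrix.PosSemidef.add ?_ ?_
      · exact psd_smul_real
          (psd_kron (psd_one_sub_proj (hPherm j) (hPidem j))
            (psd_kron Matrix.PosSemidef.one (hσdens j).1)) (htpos j).le
      · exact psd_kron (psd_proj (hPherm j) (hPidem j)) (hσpsd j)
    -- membership and conclusion
    have hmem : l₀ ∈ {l : ℝ | ∃ σ' : Matrix c c ℂ, IsDensity σ' ∧
        ((((2:ℝ) ^ (-l) : ℝ) : ℂ) • ((1 : Matrix (a × b) (a × b) ℂ) ⊗ₖ σ') - Λ).PosSemidef} :=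
      ⟨σ, hσdensity, hmainpsd⟩
    have hle : l₀ ≤ condMinEntropy Λ := le_csSup (S_bddAbove htrΛ) hmem
    have hstep1 : (2:ℝ) ^ (-(condMinEntropy Λ)) ≤ K := by
      rw [← h2l₀]
      exact (Real.rpow_le_rpow_left_iff (by norm_num)).mpr (neg_le_neg hle)
    refine hstep1.trans ?_
    rw [hKdef, hRHS, Finset.mul_sum]
    refine Finset.sum_le_sum fun j _ => ?_
    calc w j = p j / (d j : ℝ) * t j := rfl
    _ ≤ p j / (d j : ℝ) * ((2:ℝ) ^ ε * (2:ℝ) ^ (-(condMinEntropy (ρ j)))) :=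
        mul_le_mul_of_nonneg_left (htle j) (div_nonneg (hp0 j) (hdR j).le)
    _ = (2:ℝ) ^ ε * (p j / (d j : ℝ) * (2:ℝ) ^ (-(condMinEntropy (ρ j)))) := by ring
  -- pass to the limit ε → 0⁺
  have hcont : Continuous fun ε : ℝ => (2:ℝ) ^ ε * RHS := by
    have h1 : (fun ε : ℝ => (2:ℝ) ^ ε) = fun ε : ℝ => Real.exp (Real.log 2 * ε) := by
      funext ε
      rw [Real.rpow_def_of_pos (by norm_num)]
    exact ((h1 ▸ (Real.continuous_exp.comp (continuous_const.mul continuous_id)) :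
      Continuous fun ε : ℝ => (2:ℝ) ^ ε)).mul continuous_const
  have htend : Filter.Tendsto (fun ε : ℝ => (2:ℝ) ^ ε * RHS)
      (nhdsWithin 0 (Set.Ioi 0)) (nhds RHS) := by
    have h0 : (2:ℝ) ^ (0:ℝ) * RHS = RHS := by rw [Real.rpow_zero, one_mul]
    have h1 : Filter.Tendsto (fun ε : ℝ => (2:ℝ) ^ ε * RHS) (nhdsWithin 0 (Set.Ioi 0))
        (nhds ((2:ℝ) ^ (0:ℝ) * RHS)) :=
      (hcont.tendsto 0).mono_left nhdsWithin_le_nhds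
    rwa [h0] at h1
  refine ge_of_tendsto htend ?_
  filter_upwards [self_mem_nhdsWithin] with ε hε
  exact key ε hε
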